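/- Shift identity for normalized Dirichlet moments: with μ̃_n(s,α) = Σ_{m∈ℕ^k, |m|=n} (sᵐ/m!) ∏_j (α_j)_{m_j}, one has μ̃_{n−1}(s, α + e^ℓ) = Σ_{h=1}^{n} s_ℓ^{h−1} μ̃_{n−h}(s, α) for every ℓ ∈ [k] and n ≥ 1. -/

import Mathlib

/-- Normalized Dirichlet moment `μ̃_n(s, α) = ∑_{|m|=n} (s^m/m!) ∏_j (α_j)_{m_j}`. -/
noncomputable def dirMoment (k n : ℕ) (s α : Fin k → ℝ) : ℝ :=
  ∑ m ∈ Finset.Nat.antidiagonalTuple k n,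
    ∏ j, s j ^ m j / ((m j).factorial : ℝ) * (ascPochhammer ℝ (m j)).eval (α j)

/-!
`dirMoment k n s α` is the coefficient of `Xⁿ` in `∏ⱼ (1 - sⱼ X)^(-αⱼ)`, each factor expanded as
`∑ₘ (sⱼᵐ / m!) (αⱼ)ₘ Xᵐ`. Raising `α_ℓ` by one multiplies the product by the geometric series
`(1 - s_ℓ X)⁻¹ = ∑ₕ s_ℓʰ Xʰ`, and reading off coefficients gives the identity.
-/

open PowerSeries Finset

theorem ascPochhammer_eval_add_one_succ {R : Type*} [CommSemiring R] (n : ℕ) (x : R) :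
    (ascPochhammer R (n + 1)).eval (x + 1) =
      (ascPochhammer R (n + 1)).eval x + (n + 1) * (ascPochhammer R n).eval (x + 1) := by
  simpa [Polynomial.eval_comp] using
    congr_arg (Polynomial.eval x) (ascPochhammer_succ_comp_X_add_one R n)

theorem coeff_prod_univ_fin {R : Type*} [CommSemiring R] {k : ℕ} (f : Fin k → R⟦X⟧) (n : ℕ) :
    coeff n (∏ j, f j) = ∑ m ∈ Nat.antidiagonalTuple k n, ∏ j, coeff (m j) (f j) := by
  rw [coeff_prod, finsuppAntidiag, sum_map, ← piAntidiag_univ_fin_eq_antidiagonalTuple]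
  exact sum_attach _ fun (m : Fin k → ℕ) => ∏ j, coeff (m j) (f j)

theorem mk_pow_mul_one_sub_C_mul_X {R : Type*} [CommRing R] (c : R) :
    mk (c ^ ·) * (1 - C c * X) = 1 := by
  simpa [rescale_mk] using congr_arg (rescale c) (mk_one_mul_one_sub_eq_one (S := R))

section PochhammerSeries

variable {K : Type*} [Field K] [CharZero K]

noncomputable def pochhammerSeries (x c : K) : K⟦X⟧ :=
  mk fun m => c ^ m / m.factorial * (ascPochhammer K m).eval x

omit [CharZero K] in
theorem coeff_pochhammerSeries (x c : K) (m : ℕ) :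
    coeff m (pochhammerSeries x c) = c ^ m / m.factorial * (ascPochhammer K m).eval x :=
  coeff_mk _ _

theorem pochhammerSeries_add_one_mul (x c : K) :
    pochhammerSeries (x + 1) c * (1 - C c * X) = pochhammerSeries x c := by
  ext m
  rw [mul_sub, mul_one, map_sub, ← mul_assoc]
  cases m with
  | zero => simp [coeff_pochhammerSeries]
  | succ m =>
    rw [coeff_succ_mul_X, mul_comm, coeff_C_mul, coeff_pochhammerSeries, coeff_pochhammerSeries,
      coeff_pochhammerSeries, ascPochhammer_eval_add_one_succ, Nat.factorial_succ]
    push_cast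
    field_simp
    ring

theorem pochhammerSeries_add_one (x c : K) :
    pochhammerSeries (x + 1) c = pochhammerSeries x c * mk (c ^ ·) := by
  rw [← pochhammerSeries_add_one_mul x c, mul_assoc, mul_comm _ (PowerSeries.mk _),
    mk_pow_mul_one_sub_C_mul_X, mul_one]

theorem prod_pochhammerSeries_add_single {k : ℕ} (s α : Fin k → K) (ℓ : Fin k) :
    ∏ j, pochhammerSeries ((α + Pi.single ℓ 1 : Fin k → K) j) (s j)
      = (∏ j, pochhammerSeries (α j) (s j)) * mk (s ℓ ^ ·) := by
  rw [← mul_prod_erase _ _ (mem_univ ℓ), ← mul_prod_erase _ _ (mem_univ ℓ)]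
  have h_off : ∀ j ∈ univ.erase ℓ, pochhammerSeries ((α + Pi.single ℓ 1 : Fin k → K) j) (s j)
      = pochhammerSeries (α j) (s j) := fun j hj => by
    simp [Pi.single_eq_of_ne (ne_of_mem_erase hj)]
  rw [prod_congr rfl h_off]
  simp only [Pi.add_apply, Pi.single_eq_same, pochhammerSeries_add_one]
  ring

end PochhammerSeries

theorem dirMoment_eq_coeff_prod (k n : ℕ) (s α : Fin k → ℝ) :
    dirMoment k n s α = coeff n (∏ j, pochhammerSeries (α j) (s j)) := by
  simp only [coeff_prod_univ_fin, coeff_pochhammerSeries, dirMoment]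

theorem dirichlet_moment_shift (k n : ℕ) (hn : 1 ≤ n) (s α : Fin k → ℝ) (ℓ : Fin k) :
    dirMoment k (n-1) s (α + Pi.single ℓ 1)
      = ∑ h ∈ Finset.range n, s ℓ ^ h * dirMoment k (n-1-h) s α := by
  obtain ⟨n, rfl⟩ := Nat.exists_eq_add_one.mpr hn
  simp only [Nat.add_sub_cancel, dirMoment_eq_coeff_prod, prod_pochhammerSeries_add_single]
  rw [mul_comm, coeff_mul, Nat.sum_antidiagonal_eq_sum_range_succ_mk]
  simp only [coeff_mk]
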